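/- arXiv:1809.07632 — 7 statements merged into one kernel-verified Lean document; each statement's English description precedes it below -/
import Mathlib

section
/- Let a group K act on a group H by automorphisms, and form the semidirect product H ⋊ K. Then for every k ≥ 1, the k-th term of the lower central series of H ⋊ K equals the semidirect product Γ_k^K(H) ⋊ Γ_k(K), where Γ_k^K(H) is the relative lower central filtration of H inside H ⋊ K. In particular Γ_k(H ⋊ K) is generated by Γ_k^K(H) and Γ_k(K). -/
/-!
Let `N` and `L` be the images of `H` and `K`, so `N` is normal and `N ⊔ L = ⊤`. Induction on `j`
with the three subgroups lemma gives `⁅Γᵢ^G(N), Γⱼ(L)⁆ ≤ Γ_{i+j+1}^G(N)` (indices from 0). Hence,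
modulo `Γ_{k+1}^G(N)`, the subgroup `N` centralizes `Γ_{k+1}(L)`, while `L` normalizes it, so
`Γ_{k+1}^G(N) ⊔ Γ_{k+1}(L)` is normal. The commutator `⁅Γ_k^G(N) ⊔ Γ_k(L), N ⊔ L⁆` can then be
computed term by term, and the only cross term `⁅Γ_k(L), N⁆` lies in `Γ_{k+1}^G(N)`.
-/

/-- Relative lower central filtration of a (normal) subgroup `H` of `G`:
`Γ₁^G(H) = H` (index 0) and `Γ_{k+1}^G(H) = ⁅G, Γ_k^G(H)⁆`. -/
def relLCS {G : Type*} [Group G] (H : Subgroup G) : ℕ → Subgroup G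
  | 0 => H
  | k + 1 => ⁅(⊤ : Subgroup G), relLCS H k⁆

open Subgroup

section Commutator

variable {G : Type*} [Group G]

theorem QuotientGroup.map_mk'_eq_bot_iff {N X : Subgroup G} [N.Normal] :
    X.map (QuotientGroup.mk' N) = ⊥ ↔ X ≤ N := by
  rw [Subgroup.map_eq_bot_iff, QuotientGroup.ker_mk']

theorem Subgroup.commutator_le_iff_map_le_centralizer {M X C : Subgroup G} [M.Normal] :
    ⁅X, C⁆ ≤ M ↔ X.map (QuotientGroup.mk' M) ≤ centralizer (C.map (QuotientGroup.mk' M)) := by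
  rw [← commutator_eq_bot_iff_le_centralizer, ← map_commutator, QuotientGroup.map_mk'_eq_bot_iff]

theorem Subgroup.commutator_commutator_le_of_rotate {H₁ H₂ H₃ M : Subgroup G} [M.Normal]
    (h1 : ⁅⁅H₂, H₃⁆, H₁⁆ ≤ M) (h2 : ⁅⁅H₃, H₁⁆, H₂⁆ ≤ M) : ⁅⁅H₁, H₂⁆, H₃⁆ ≤ M := by
  simp only [← QuotientGroup.map_mk'_eq_bot_iff, map_commutator] at h1 h2 ⊢
  exact commutator_commutator_eq_bot_of_rotate h1 h2

theorem Subgroup.commutator_sup_left_le {A B C M : Subgroup G} [M.Normal]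
    (hA : ⁅A, C⁆ ≤ M) (hB : ⁅B, C⁆ ≤ M) : ⁅A ⊔ B, C⁆ ≤ M := by
  rw [commutator_le_iff_map_le_centralizer] at hA hB ⊢
  rw [map_sup]
  exact sup_le hA hB

theorem Subgroup.normal_sup_of_commutator_le {A B C D : Subgroup G} [A.Normal]
    (hCD : C ⊔ D = ⊤) (hC : ⁅C, B⁆ ≤ A) (hD : D ≤ normalizer B) : (A ⊔ B).Normal := by
  set f := QuotientGroup.mk' A
  have : (B.map f).Normal := by
    rw [← normalizer_eq_top_iff, eq_top_iff,
      ← map_top_of_surjective f (QuotientGroup.mk'_surjective A),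
      ← hCD, map_sup]
    refine sup_le ?_ ((map_mono hD).trans (le_normalizer_map f))
    exact (commutator_le_iff_map_le_centralizer.mp hC).trans (centralizer_le_normalizer _)
  rw [← QuotientGroup.comap_map_mk']
  infer_instance

end Commutator

section RelLCS

variable {G : Type*} [Group G]

instance relLCS_normal (N : Subgroup G) [N.Normal] (k : ℕ) : (relLCS N k).Normal := by
  induction k with
  | zero => assumption
  | succ k ih => exact commutator_normal ⊤ (relLCS N k)

theorem commutator_relLCS_le (N X : Subgroup G) (i : ℕ) : ⁅relLCS N i, X⁆ ≤ relLCS N (i + 1) := by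
  rw [commutator_comm]
  exact commutator_mono le_top le_rfl

theorem commutator_relLCS_lowerCentralSeries_le (N L : Subgroup G) [N.Normal] (i j : ℕ) :
    ⁅relLCS N i, L.lowerCentralSeries j⁆ ≤ relLCS N (i + j + 1) := by
  induction j generalizing i with
  | zero => exact commutator_relLCS_le N L i
  | succ j ih =>
    rw [Subgroup.lowerCentralSeries_succ, commutator_comm]
    apply commutator_commutator_le_of_rotate
    · rw [show i + (j + 1) + 1 = i + 1 + j + 1 by omega]
      have hL : ⁅L, relLCS N i⁆ ≤ relLCS N (i + 1) := by
        rw [commutator_comm]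
        exact commutator_relLCS_le N L i
      exact (commutator_mono hL le_rfl).trans (ih (i + 1))
    · exact (commutator_mono (ih i) le_rfl).trans (commutator_relLCS_le N L _)

theorem commutator_le_relLCS_succ (N L : Subgroup G) [N.Normal] (k : ℕ) :
    ⁅N, L.lowerCentralSeries k⁆ ≤ relLCS N (k + 1) := by
  simpa [relLCS] using commutator_relLCS_lowerCentralSeries_le N L 0 k

theorem top_lowerCentralSeries_eq_relLCS_sup {N L : Subgroup G} [N.Normal] (hNL : N ⊔ L = ⊤)
    (k : ℕ) : (⊤ : Subgroup G).lowerCentralSeries k = relLCS N k ⊔ L.lowerCentralSeries k := by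
  induction k with
  | zero => exact hNL.symm
  | succ k ih =>
    have : (relLCS N (k + 1) ⊔ L.lowerCentralSeries (k + 1)).Normal :=
      normal_sup_of_commutator_le hNL
        ((commutator_mono le_rfl (L.lowerCentralSeries_antitone k.le_succ)).trans
          (commutator_le_relLCS_succ N L k))
        (L.self_le_normalizer_lowerCentralSeries (k + 1))
    rw [Subgroup.lowerCentralSeries_succ, ih]
    apply le_antisymm
    · rw [← hNL]
      refine commutator_sup_left_le ((commutator_relLCS_le N _ k).trans le_sup_left) ?_
      rw [commutator_comm]
      refine commutator_sup_left_le ((commutator_le_relLCS_succ N L k).trans le_sup_left) ?_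
      rw [commutator_comm]
      exact le_sup_right
    · exact sup_le ((commutator_comm _ _).trans_le (commutator_mono le_sup_left le_rfl))
        (commutator_mono le_sup_right le_top)

end RelLCS

namespace SemidirectProduct

variable {H K : Type*} [Group H] [Group K] (φ : K →* MulAut H)

instance range_inl_normal : (inl : H →* H ⋊[φ] K).range.Normal :=
  range_inl_eq_ker_rightHom (φ := φ) ▸ inferInstance

theorem range_inl_sup_range_inr :
    (inl : H →* H ⋊[φ] K).range ⊔ (inr : K →* H ⋊[φ] K).range = ⊤ := by
  refine eq_top_iff.mpr fun x _ ↦ ?_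
  rw [← inl_left_mul_inr_right x]
  exact mul_mem (mem_sup_left ⟨x.left, rfl⟩) (mem_sup_right ⟨x.right, rfl⟩)

end SemidirectProduct

/-- `Γ_k(H ⋊ K) = Γ_k^K(H) ⋊ Γ_k(K)`: the `k`-th term of the lower central series of the
semidirect product is generated by the relative lower central filtration of `H` and the
lower central series of `K` (0-based indexing). -/
theorem lowerCentralSeries_semidirectProduct {H K : Type*} [Group H] [Group K]
    (φ : K →* MulAut H) (k : ℕ) :
    Subgroup.lowerCentralSeries (⊤ : Subgroup (H ⋊[φ] K)) k =
      relLCS (SemidirectProduct.inl : H →* H ⋊[φ] K).range k ⊔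
        (Subgroup.lowerCentralSeries (⊤ : Subgroup K) k).map (SemidirectProduct.inr : K →* H ⋊[φ] K) := by
  rw [map_lowerCentralSeries, ← MonoidHom.range_eq_map]
  exact top_lowerCentralSeries_eq_relLCS_sup (SemidirectProduct.range_inl_sup_range_inr φ) k
end

section
/- Let a group K act on a group H by automorphisms. If the induced action of K on the abelianization H^{ab} is trivial (equivalently [K,H] ⊆ [H,H] inside H ⋊ K), then [K, Γ_i(H)] ⊆ Γ_{i+1}(H) inside H ⋊ K for all i ≥ 1. -/
/-!
In `H ⋊ K` the commutator `⁅k, h⁆` is `(k • h) h⁻¹`, so the claim is `⁅K, Γᵢ(H)⁆ ≤ Γᵢ₊₁(H)`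
for the normal subgroup `H` of the semidirect product. This follows by induction on `i` from the
three subgroups lemma modulo the normal subgroup `Γᵢ₊₂(H)`: writing `Γᵢ₊₁ = ⁅Γᵢ, H⁆`, the rotated
commutators `⁅⁅K, Γᵢ⁆, H⁆ ≤ ⁅Γᵢ₊₁, H⁆` (induction) and `⁅⁅H, K⁆, Γᵢ⁆ ≤ ⁅Γ₁, Γᵢ⁆ ≤ Γᵢ₊₂`
(hypothesis, and the three subgroups lemma once more) both land in `Γᵢ₊₂(H)`.
-/

open Subgroup
open scoped commutatorElement

namespace Subgroup

variable {G : Type*} [Group G]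

theorem commutator_commutator_le_of_rotate_s5 {A B C N : Subgroup G} [N.Normal]
    (h1 : ⁅⁅B, C⁆, A⁆ ≤ N) (h2 : ⁅⁅C, A⁆, B⁆ ≤ N) : ⁅⁅A, B⁆, C⁆ ≤ N := by
  have le_iff_map_eq_bot : ∀ X Y Z : Subgroup G, ⁅⁅X, Y⁆, Z⁆ ≤ N ↔
      ⁅⁅X.map (QuotientGroup.mk' N), Y.map (QuotientGroup.mk' N)⁆,
        Z.map (QuotientGroup.mk' N)⁆ = ⊥ := fun X Y Z => by
    rw [← map_commutator, ← map_commutator, map_eq_bot_iff, QuotientGroup.ker_mk']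
  rw [le_iff_map_eq_bot] at h1 h2 ⊢
  exact commutator_commutator_eq_bot_of_rotate h1 h2

variable {H : Subgroup G} [H.Normal]

theorem commutator_commutator_lowerCentralSeries_le (i : ℕ) :
    ⁅⁅H, H⁆, H.lowerCentralSeries i⁆ ≤ H.lowerCentralSeries (i + 2) :=
  commutator_commutator_le_of_rotate_s5 (by rw [commutator_comm H]; rfl) le_rfl

theorem commutator_lowerCentralSeries_le_succ {K : Subgroup G} (hK : ⁅K, H⁆ ≤ ⁅H, H⁆) (i : ℕ) :
    ⁅K, H.lowerCentralSeries i⁆ ≤ H.lowerCentralSeries (i + 1) := by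
  induction i with
  | zero => exact hK
  | succ i ih =>
    rw [lowerCentralSeries_succ, commutator_comm]
    refine commutator_commutator_le_of_rotate_s5 ?_ (commutator_mono ih le_rfl)
    calc ⁅⁅H, K⁆, H.lowerCentralSeries i⁆
        ≤ ⁅⁅H, H⁆, H.lowerCentralSeries i⁆ := commutator_mono (commutator_comm H K ▸ hK) le_rfl
      _ ≤ H.lowerCentralSeries (i + 2) := commutator_commutator_lowerCentralSeries_le i

end Subgroup

namespace SemidirectProduct

variable {N G : Type*} [Group N] [Group G] {φ : G →* MulAut N}

theorem commutatorElement_inr_inl (g : G) (n : N) :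
    ⁅(inr g : N ⋊[φ] G), (inl n : N ⋊[φ] G)⁆ = inl (φ g n * n⁻¹) := by
  rw [commutatorElement_def, map_mul, map_inv, inl_aut, map_inv]

instance normal_range_inl : (inl : N →* N ⋊[φ] G).range.Normal := by
  rw [range_inl_eq_ker_rightHom]
  infer_instance

theorem lowerCentralSeries_range_inl (n : ℕ) :
    (inl : N →* N ⋊[φ] G).range.lowerCentralSeries n =
      ((⊤ : Subgroup N).lowerCentralSeries n).map inl := by
  rw [map_lowerCentralSeries, MonoidHom.range_eq_map]

end SemidirectProduct

open SemidirectProduct in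
/-- If `K` acts trivially on `H^{ab}`, then `[K, Γ_i(H)] ⊆ Γ_{i+1}(H)` (0-based indexing:
index `i` corresponds to `Γ_{i+1}(H)`). -/
theorem action_trivial_on_lcs_quotients {H K : Type*} [Group H] [Group K]
    (φ : K →* MulAut H)
    (hab : ∀ (k : K) (h : H), φ k h * h⁻¹ ∈ commutator H)
    (i : ℕ) (k : K) (h : H) (hh : h ∈ (⊤ : Subgroup H).lowerCentralSeries i) :
    φ k h * h⁻¹ ∈ (⊤ : Subgroup H).lowerCentralSeries (i + 1) := by
  have hK : ⁅(inr : K →* H ⋊[φ] K).range, (inl : H →* H ⋊[φ] K).range⁆ ≤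
      ⁅(inl : H →* H ⋊[φ] K).range, (inl : H →* H ⋊[φ] K).range⁆ := by
    rw [commutator_le]
    rintro _ ⟨k, rfl⟩ _ ⟨h, rfl⟩
    rw [commutatorElement_inr_inl]
    change _ ∈ (inl : H →* H ⋊[φ] K).range.lowerCentralSeries 1
    rw [lowerCentralSeries_range_inl]
    exact mem_map_of_mem _ (hab k h)
  have hmem : ⁅(inr k : H ⋊[φ] K), (inl h : H ⋊[φ] K)⁆ ∈
      (inl : H →* H ⋊[φ] K).range.lowerCentralSeries (i + 1) :=
    commutator_lowerCentralSeries_le_succ hK i <| commutator_mem_commutator ⟨k, rfl⟩ <| by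
      rw [lowerCentralSeries_range_inl]
      exact mem_map_of_mem _ hh
  rwa [commutatorElement_inr_inl, lowerCentralSeries_range_inl,
    mem_map_iff_mem inl_injective] at hmem
end

section
/- Let a group K act on a group H by automorphisms. If [K,H] ⊆ [H,H] (action trivial on H^{ab}), then the abelianization of H ⋊ K is isomorphic to H^{ab} × K^{ab}. -/
open SemidirectProduct

/-- If the action of `K` on `H^{ab}` is trivial, then `(H ⋊ K)^{ab} ≅ H^{ab} × K^{ab}`. -/
theorem abelianization_almost_direct_product {H K : Type*} [Group H] [Group K]
    (φ : K →* MulAut H)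
    (hab : ∀ (k : K) (h : H), φ k h * h⁻¹ ∈ commutator H) :
    Nonempty (Abelianization (H ⋊[φ] K) ≃* Abelianization H × Abelianization K) := by
  have key : ∀ (k : K) (h : H), Abelianization.of (φ k h) = Abelianization.of h := by
    intro k h
    have : Abelianization.of (φ k h * h⁻¹) = 1 :=
      (QuotientGroup.eq_one_iff _).mpr (hab k h)
    rw [map_mul, map_inv, mul_inv_eq_one] at this
    exact this
  let f1 : H ⋊[φ] K →* Abelianization H × Abelianization K :=
    MonoidHom.mk' (fun g => (Abelianization.of g.left, Abelianization.of g.right)) (by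
      intro a b
      simp [Prod.ext_iff, map_mul, key])
  let f := Abelianization.lift f1
  let gH : Abelianization H →* Abelianization (H ⋊[φ] K) :=
    Abelianization.lift (Abelianization.of.comp (inl (φ := φ)))
  let gK : Abelianization K →* Abelianization (H ⋊[φ] K) :=
    Abelianization.lift (Abelianization.of.comp (inr (φ := φ)))
  let g := gH.coprod gK
  refine ⟨MonoidHom.toMulEquiv f g ?_ ?_⟩
  · apply Abelianization.hom_ext
    ext x
    show g (f1 x) = Abelianization.of x
    show gH (Abelianization.of x.left) * gK (Abelianization.of x.right) = _
    show Abelianization.of (inl x.left) * Abelianization.of (inr x.right) = _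
    rw [← map_mul, inl_left_mul_inr_right]
  · have h1 : ∀ a : Abelianization H, f (gH a) = (a, 1) := by
      intro a
      induction a using QuotientGroup.induction_on with
      | _ x => show f1 (inl x) = _; simp [f1]; rfl
    have h2 : ∀ b : Abelianization K, f (gK b) = (1, b) := by
      intro b
      induction b using QuotientGroup.induction_on with
      | _ x => show f1 (inr x) = _; simp [f1]; rfl
    refine MonoidHom.ext fun p => ?_
    obtain ⟨a, b⟩ := p
    show f (gH a * gK b) = (a, b)
    rw [map_mul, h1, h2, Prod.mk_mul_mk, mul_one, one_mul]
end

section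
/- Let G be a group with a strongly central filtration A_* (A₁ = G, [A_i, A_j] ⊆ A_{i+j}), and let H, K be subgroups with K normalizing H, so that HK is a subgroup with H ∩ K = 1 (internal semidirect product). If inside the associated graded Lie ring of A_* the images of A_* ∩ H and A_* ∩ K intersect trivially in each degree, then for every j, A_j ∩ HK = (A_j ∩ H)(A_j ∩ K). -/
/-- Decomposition of an induced filtration: if `A_*` is a strongly central filtration
on `G` (0-based: index `i` is `A_{i+1}`), `H, K ≤ G` with `K` normalizing `H` and
`H ∩ K = 1`, and the images of `A_* ∩ H` and `A_* ∩ K` in the graded Lie ring intersect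
trivially in each degree, then `A_j ∩ HK = (A_j ∩ H)(A_j ∩ K)` for every `j`. -/
theorem induced_filtration_decomposition {G : Type*} [Group G] (A : ℕ → Subgroup G)
    (hA0 : A 0 = ⊤) (hdec : ∀ i, A (i + 1) ≤ A i)
    (hsc : ∀ i j, ⁅A i, A j⁆ ≤ A (i + j + 1))
    (H K : Subgroup G)
    (hnorm : ∀ k ∈ K, ∀ h ∈ H, k * h * k⁻¹ ∈ H)
    (hdisj : H ⊓ K = ⊥)
    (hgraded : ∀ i, ∀ h ∈ A i ⊓ H, ∀ k ∈ A i ⊓ K,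
      h * k ∈ A (i + 1) → h ∈ A (i + 1) ∧ k ∈ A (i + 1))
    (j : ℕ) (g : G) (hg : g ∈ A j) (hgHK : ∃ h ∈ H, ∃ k ∈ K, g = h * k) :
    ∃ h ∈ A j ⊓ H, ∃ k ∈ A j ⊓ K, g = h * k := by
  obtain ⟨h, hH, k, hK, rfl⟩ := hgHK
  have mono : ∀ m n : ℕ, m ≤ n → A n ≤ A m := by
    intro m n hmn
    induction n with
    | zero => simp_all
    | succ n ih =>
      rcases Nat.lt_or_ge m (n+1) with h1 | h1
      · exact (hdec n).trans (ih (Nat.lt_succ_iff.mp h1))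
      · have : m = n + 1 := le_antisymm hmn h1
        subst this; exact le_refl _
  have key : ∀ i ≤ j, h ∈ A i ∧ k ∈ A i := by
    intro i hi
    induction i with
    | zero => simp [hA0]
    | succ i ih =>
      obtain ⟨hh, hk⟩ := ih (Nat.le_of_succ_le hi)
      exact hgraded i h ⟨hh, hH⟩ k ⟨hk, hK⟩ (mono (i+1) j hi hg)
  obtain ⟨hh, hk⟩ := key j le_rfl
  exact ⟨h, ⟨hh, hH⟩, k, ⟨hk, hK⟩, rfl⟩
end

section
/- In a free Lie ring L(V) on a free ℤ-module V with basis (x₁,...,x_n), n ≥ 2, the centralizer of a basis element x_i is ℤ·x_i. -/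
/-!
The Lyndon brackets `b w` (a Lyndon word `w` bracketed along its standard factorization) span the
free Lie algebra, and the canonical map into the free associative algebra sends `b w` to `w` plus
lexicographically larger words of the same length. If `⁅u, xᵢ⁆ = 0`, the image of `u` commutes
with `xᵢ`, and comparing coefficients of `u xᵢ` and `xᵢ u` shows that every word in its support
is a power of `i`. Writing `u - c xᵢ = ∑ c_w b_w` without a `[i]` term, the least `w` with
`c_w ≠ 0` keeps its coefficient in the image, so it would be a Lyndon power of `i` other than
`[i]`, and there is none.
-/

namespace List

variable {α : Type*}

theorem suffix_tail_iff {s w : List α} (hw : w ≠ []) : s <:+ w.tail ↔ s <:+ w ∧ s ≠ w := by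
  obtain ⟨a, t, rfl⟩ := exists_cons_of_ne_nil hw
  refine ⟨fun h => ⟨h.trans (suffix_cons a t), ?_⟩, fun ⟨h, hne⟩ => ?_⟩
  · rintro rfl
    simpa using h.length_le
  · exact (suffix_cons_iff.mp h).resolve_left hne

theorem suffix_append_cases {s u v : List α} (h : s <:+ u ++ v) :
    s <:+ v ∨ ∃ s', s' <:+ u ∧ s' ≠ [] ∧ s = s' ++ v := by
  obtain ⟨p, hp⟩ := h
  rcases append_eq_append_iff.mp hp with ⟨c, rfl, rfl⟩ | ⟨c, -, rfl⟩
  · rcases eq_or_ne c [] with rfl | hc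
    · exact .inl (suffix_refl v)
    · exact .inr ⟨c, suffix_append _ _, hc, rfl⟩
  · exact .inl (suffix_append _ _)

theorem finite_setOf_subperm (W : List α) : {x | x <+~ W}.Finite :=
  (W.sublists.flatMap permutations).finite_toSet.subset fun _ ⟨s, hs, hsW⟩ =>
    mem_flatMap.mpr ⟨s, mem_sublists.mpr hsW, mem_permutations.mpr hs.symm⟩

section LinearOrder

variable [LinearOrder α]

-- Core's `IsPrefix.le` concerns core's `≤` on lists, which is not definitionally Mathlib's.
theorem le_of_prefix {u v : List α} (h : u <+: v) : u ≤ v :=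
  not_lt.mp (List.not_lt.mpr h.le)

theorem lt_append_of_lt {u v : List α} (h : u < v) (t : List α) : u < v ++ t :=
  Lex.append_right _ t h

theorem append_lt_append_left_iff (p : List α) {u v : List α} : p ++ u < p ++ v ↔ u < v :=
  (show StrictMono (p ++ ·) from fun _ _ h => append_left_lt h).lt_iff_lt

theorem append_le_append_left_iff (p : List α) {u v : List α} : p ++ u ≤ p ++ v ↔ u ≤ v :=
  (show StrictMono (p ++ ·) from fun _ _ h => append_left_lt h).le_iff_le

theorem append_lt_append_of_lt_of_not_prefix {u v : List α} (h : u < v) (hp : ¬u <+: v)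
    (x y : List α) : u ++ x < v ++ y := by
  induction h with
  | nil => exact absurd nil_prefix hp
  | cons _ ih => exact Lex.cons (ih fun h => hp (prefix_cons_inj _ |>.mpr h))
  | rel h => exact Lex.rel h

theorem append_lt_append_of_lt_of_length_eq {u v : List α} (h : u < v)
    (hl : u.length = v.length) (x y : List α) : u ++ x < v ++ y :=
  append_lt_append_of_lt_of_not_prefix h (fun hp => h.ne (hp.eq_of_length hl)) x y

theorem append_le_append_of_le_of_length_eq {u v x y : List α} (h : u ≤ v)
    (hl : u.length = v.length) (hxy : x ≤ y) : u ++ x ≤ v ++ y := by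
  rcases h.lt_or_eq with h | rfl
  · exact (append_lt_append_of_lt_of_length_eq h hl x y).le
  · exact (append_le_append_left_iff u).mpr hxy

def IsLyndon (w : List α) : Prop :=
  w ≠ [] ∧ ∀ s, s ≠ [] → s <:+ w → s ≠ w → w < s

theorem isLyndon_singleton (a : α) : IsLyndon [a] :=
  ⟨cons_ne_nil a [], fun _ hs hsfx hne =>
    absurd (suffix_nil.mp ((suffix_cons_iff.mp hsfx).resolve_left hne)) hs⟩

theorem IsLyndon.append_lt {u v : List α} (hu : u ≠ []) (hv : IsLyndon v) (huv : u < v) :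
    u ++ v < v := by
  by_cases hp : u <+: v
  · obtain ⟨z, rfl⟩ := hp
    have hz : z ≠ [] := by
      rintro rfl
      exact huv.ne (append_nil u).symm
    have hzu : z ≠ u ++ z := fun h => hu (by simpa using congrArg length h)
    simpa using (append_lt_append_left_iff u).mpr (hv.2 z hz (suffix_append u z) hzu)
  · simpa using append_lt_append_of_lt_of_not_prefix huv hp v []

theorem IsLyndon.append_lt_append_comm {u v : List α} (hu : u ≠ []) (hv : IsLyndon v)
    (huv : u < v) : u ++ v < v ++ u :=
  (hv.append_lt hu huv).trans_le (le_of_prefix (prefix_append v u))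

theorem IsLyndon.append {u v : List α} (hu : IsLyndon u) (hv : IsLyndon v) (huv : u < v) :
    IsLyndon (u ++ v) := by
  have hlt : u ++ v < v := hv.append_lt hu.1 huv
  refine ⟨by simp [hu.1], fun s hs hsfx hne => ?_⟩
  rcases suffix_append_cases hsfx with h | ⟨s', hs'u, hs', rfl⟩
  · rcases eq_or_ne s v with rfl | hsv
    · exact hlt
    · exact hlt.trans (hv.2 s hs h hsv)
  · have hs'ne : s' ≠ u := by rintro rfl; exact hne rfl
    refine append_lt_append_of_lt_of_not_prefix (hu.2 s' hs' hs'u hs'ne) (fun hp => ?_) v v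
    exact hs'ne (hp.eq_of_length (le_antisymm hp.length_le hs'u.length_le)).symm

theorem IsLyndon.eq_singleton_of_forall_eq {w : List α} {i : α} (hw : IsLyndon w)
    (h : ∀ a ∈ w, a = i) : w = [i] := by
  obtain ⟨k, rfl⟩ : ∃ k, w = replicate k i := ⟨w.length, eq_replicate_iff.mpr ⟨rfl, h⟩⟩
  match k, hw with
  | 0, hw => exact absurd rfl hw.1
  | 1, _ => rfl
  | k + 2, hw =>
    have hlt := hw.2 (replicate (k + 1) i) (by simp) (by simp [replicate_succ]) (by simp)
    have hpfx : replicate (k + 1) i <+: replicate (k + 2) i := by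
      rw [replicate_succ' (n := k + 1)]
      exact prefix_append _ _
    exact absurd hlt (not_lt.mpr (le_of_prefix hpfx))

/-- For a Lyndon word `w` of length at least two, `w = stdLeft w ++ stdRight w` is its standard
factorization: `stdRight w` is the least nonempty proper suffix of `w`. -/
def stdRight (w : List α) : List α :=
  ((w.tail.tails.filter (· ≠ [])).min?).getD []

def stdLeft (w : List α) : List α :=
  w.take (w.length - (stdRight w).length)

theorem isLeast_stdRight {w : List α} (hw : 2 ≤ w.length) :
    IsLeast {s | s ≠ [] ∧ s <:+ w.tail} (stdRight w) := by
  have hmem : ∀ s, s ∈ w.tail.tails.filter (· ≠ []) ↔ s ≠ [] ∧ s <:+ w.tail := by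
    simp [and_comm]
  obtain ⟨m, hm⟩ := Option.isSome_iff_exists.mp
    (isSome_min?_of_mem ((hmem w.tail).mpr ⟨ne_nil_of_length_pos (by simp; omega),
      suffix_refl _⟩))
  rw [stdRight, hm, Option.getD_some]
  obtain ⟨hm, hmin⟩ := min?_eq_some_iff.mp hm
  exact ⟨(hmem m).mp hm, fun s hs => hmin s ((hmem s).mpr hs)⟩

theorem stdRight_ne_nil {w : List α} (hw : 2 ≤ w.length) : stdRight w ≠ [] :=
  (isLeast_stdRight hw).1.1

theorem stdRight_suffix_tail {w : List α} (hw : 2 ≤ w.length) : stdRight w <:+ w.tail :=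
  (isLeast_stdRight hw).1.2

theorem stdRight_length_lt {w : List α} (hw : 2 ≤ w.length) :
    (stdRight w).length < w.length := by
  have := (stdRight_suffix_tail hw).length_le
  simp at this
  omega

theorem stdLeft_append_stdRight {w : List α} (hw : 2 ≤ w.length) :
    stdLeft w ++ stdRight w = w := by
  rw [stdLeft, suffix_iff_eq_drop.mp ((stdRight_suffix_tail hw).trans (tail_suffix w)),
    length_drop, Nat.sub_sub_self (Nat.sub_le _ _), take_append_drop]

theorem stdLeft_ne_nil {w : List α} (hw : 2 ≤ w.length) : stdLeft w ≠ [] := by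
  intro h
  have := congrArg length (stdLeft_append_stdRight hw)
  rw [h, nil_append] at this
  exact (stdRight_length_lt hw).ne this

theorem stdLeft_length_lt {w : List α} (hw : 2 ≤ w.length) : (stdLeft w).length < w.length := by
  have h := congrArg length (stdLeft_append_stdRight hw)
  have := length_pos_iff.mpr (stdRight_ne_nil hw)
  simp only [length_append] at h
  omega

theorem isLyndon_stdRight {w : List α} (hw : 2 ≤ w.length) : IsLyndon (stdRight w) :=
  ⟨stdRight_ne_nil hw, fun _ hs hsfx hne =>
    lt_of_le_of_ne ((isLeast_stdRight hw).2 ⟨hs, hsfx.trans (stdRight_suffix_tail hw)⟩)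
      hne.symm⟩

theorem IsLyndon.lt_stdRight {w : List α} (hw : IsLyndon w) (h2 : 2 ≤ w.length) :
    w < stdRight w := by
  have := (suffix_tail_iff hw.1).mp (stdRight_suffix_tail h2)
  exact hw.2 _ (stdRight_ne_nil h2) this.1 this.2

theorem IsLyndon.isLyndon_stdLeft {w : List α} (hw : IsLyndon w) (h2 : 2 ≤ w.length) :
    IsLyndon (stdLeft w) := by
  set u := stdLeft w
  set m := stdRight w
  have hum : u ++ m = w := stdLeft_append_stdRight h2
  refine ⟨stdLeft_ne_nil h2, fun s hs hsu hne => lt_of_not_ge fun hsle => ?_⟩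
  obtain ⟨t, htu⟩ := hsu
  have hw_lt : w < s ++ m := hw.2 _ (by simp [hs]) (by simp [← hum, ← htu])
    (fun h => hne (by simpa [← hum, ← htu] using congrArg length h))
  by_cases hp : s <+: u
  · -- `w = s ++ r ++ m` with `r ≠ []`, and `w < s ++ m` gives `r ++ m < m`, against the
    -- minimality of `m`
    obtain ⟨r, hr⟩ := hp
    have hr0 : r ≠ [] := by rintro rfl; exact hne (by simpa using hr)
    have hrm : r ++ m < m := by
      rw [← append_lt_append_left_iff s, ← append_assoc, hr, hum]
      exact hw_lt
    have hmem : r ++ m ∈ {s | s ≠ [] ∧ s <:+ w.tail} := by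
      refine ⟨by simp [hr0], (suffix_tail_iff hw.1).mpr ⟨?_, fun h => hs ?_⟩⟩
      · rw [← hum, ← hr, append_assoc]
        exact suffix_append _ _
      · simpa [← hum, ← hr] using congrArg length h
    exact absurd hrm (not_lt.mpr ((isLeast_stdRight h2).2 hmem))
  · have := append_lt_append_of_lt_of_not_prefix (lt_of_le_of_ne hsle hne) hp m m
    rw [hum] at this
    exact absurd hw_lt (not_lt.mpr this.le)

theorem stdRight_append {u v : List α} (hu : u ≠ []) (hv : IsLyndon v)
    (h : ∀ s, s ≠ [] → s <:+ u → s ≠ u → v ≤ s) : stdRight (u ++ v) = v := by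
  have huv : u ++ v ≠ [] := by simp [hu]
  have h2 : 2 ≤ (u ++ v).length := by
    have := length_pos_iff.mpr hu
    have := length_pos_iff.mpr hv.1
    simp
    omega
  refine (isLeast_stdRight h2).unique ⟨⟨hv.1, ?_⟩, fun s ⟨hs, hsfx⟩ => ?_⟩
  · exact (suffix_tail_iff huv).mpr
      ⟨suffix_append u v, fun h => hu (by simpa using congrArg length h)⟩
  · obtain ⟨hsfx, hsne⟩ := (suffix_tail_iff huv).mp hsfx
    rcases suffix_append_cases hsfx with hsv | ⟨s', hs'u, hs', rfl⟩
    · rcases eq_or_ne s v with rfl | hne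
      · exact le_rfl
      · exact (hv.2 s hs hsv hne).le
    · rcases (h s' hs' hs'u (by rintro rfl; exact hsne rfl)).lt_or_eq with hlt | rfl
      · exact (lt_append_of_lt hlt v).le
      · exact le_of_prefix (prefix_append v v)

theorem stdLeft_append_of_stdRight_eq {u v : List α} (h : stdRight (u ++ v) = v) :
    stdLeft (u ++ v) = u := by
  simp [stdLeft, h]

end LinearOrder

end List

theorem Submodule.lie_mem_of_mem_span {R L : Type*} [CommRing R] [LieRing L] [LieAlgebra R L]
    {x : L} {s : Set L} {p : Submodule R L} (h : ∀ y ∈ s, ⁅x, y⁆ ∈ p) {y : L}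
    (hy : y ∈ Submodule.span R s) : ⁅x, y⁆ ∈ p := by
  simpa using Submodule.span_le (p := p.comap (LieAlgebra.ad R L x)).mpr
    (fun y hy => by simpa using h y hy) hy

namespace FreeLieAlgebra

theorem mem_of_forall_of_mem {R X : Type*} [CommRing R]
    (K : LieSubalgebra R (FreeLieAlgebra R X)) (h : ∀ x, of R x ∈ K) (u : FreeLieAlgebra R X) :
    u ∈ K := by
  have hid : K.incl.comp (lift R fun x => ⟨of R x, h x⟩) = LieHom.id :=
    hom_ext fun x => by simp
  rw [← LieHom.id_apply (R := R) u, ← hid]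
  exact (lift R (fun x => (⟨of R x, h x⟩ : K)) u).2

open List

variable (R : Type*) {α : Type*} [CommRing R] [LinearOrder α]

noncomputable def lyndonBracket (w : List α) : FreeLieAlgebra R α :=
  if _ : 2 ≤ w.length then
    ⁅lyndonBracket (stdLeft w), lyndonBracket (stdRight w)⁆
  else
    match w with
    | [a] => of R a
    | _ => 0
termination_by w.length
decreasing_by
  · exact stdLeft_length_lt ‹_›
  · exact stdRight_length_lt ‹_›

theorem lyndonBracket_singleton (a : α) : lyndonBracket R [a] = of R a := by
  rw [lyndonBracket]
  simp

theorem lyndonBracket_of_two_le_length {w : List α} (h : 2 ≤ w.length) :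
    lyndonBracket R w = ⁅lyndonBracket R (stdLeft w), lyndonBracket R (stdRight w)⁆ := by
  rw [lyndonBracket]
  simp [h]

theorem lie_lyndonBracket_eq_of_le_stdRight {u v : List α} (hu : IsLyndon u) (hv : IsLyndon v)
    (hstd : u.length = 1 ∨ v ≤ stdRight u) :
    ⁅lyndonBracket R u, lyndonBracket R v⁆ = lyndonBracket R (u ++ v) := by
  have hu0 := length_pos_iff.mpr hu.1
  have hv0 := length_pos_iff.mpr hv.1
  have hsuf : ∀ s, s ≠ [] → s <:+ u → s ≠ u → v ≤ s := fun s hs hsu hne => by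
    have : s.length < u.length := lt_of_le_of_ne hsu.length_le (mt hsu.eq_of_length hne)
    have := length_pos_iff.mpr hs
    refine hstd.resolve_left (by omega) |>.trans ((isLeast_stdRight (by omega)).2 ⟨hs, ?_⟩)
    exact (suffix_tail_iff hu.1).mpr ⟨hsu, hne⟩
  have hright := stdRight_append hu.1 hv hsuf
  rw [lyndonBracket_of_two_le_length R (w := u ++ v) (by simp; omega), hright,
    stdLeft_append_of_stdRight_eq hright]

def lyndonWordsBetween (u v : List α) : Set (List α) :=
  {l | IsLyndon l ∧ l ~ u ++ v ∧ u ++ v ≤ l ∧ l < v}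

theorem span_lyndonWordsBetween_mono {u v u' v' : List α} (hperm : u' ++ v' ~ u ++ v)
    (hle : u ++ v ≤ u' ++ v') (hv : v' ≤ v) :
    Submodule.span R (lyndonBracket R '' lyndonWordsBetween u' v') ≤
      Submodule.span R (lyndonBracket R '' lyndonWordsBetween u v) :=
  Submodule.span_mono <| Set.image_mono fun _ ⟨hl, hlp, hlle, hllt⟩ =>
    ⟨hl, hlp.trans hperm, hle.trans hlle, hllt.trans_le hv⟩

theorem lie_lyndonBracket_lie_mem_span_of_lt {p q u v : List α} (hp : IsLyndon p)
    (hpq : p < q) (hpqu : p ++ q = u)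
    (hqv : ⁅lyndonBracket R q, lyndonBracket R v⁆ ∈
      Submodule.span R (lyndonBracket R '' lyndonWordsBetween q v))
    (ih : ∀ x y, IsLyndon x → IsLyndon y → x < y → x ++ y ~ u ++ v → y < v →
      ⁅lyndonBracket R x, lyndonBracket R y⁆ ∈
        Submodule.span R (lyndonBracket R '' lyndonWordsBetween x y)) :
    ⁅lyndonBracket R p, ⁅lyndonBracket R q, lyndonBracket R v⁆⁆ ∈
      Submodule.span R (lyndonBracket R '' lyndonWordsBetween u v) := by
  refine Submodule.lie_mem_of_mem_span ?_ hqv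
  rintro _ ⟨m, ⟨hm, hmp, hmle, hmlt⟩, rfl⟩
  have hperm : p ++ m ~ u ++ v := by
    rw [← hpqu, append_assoc]
    exact hmp.append_left p
  refine span_lyndonWordsBetween_mono R hperm ?_ hmlt.le
    (ih p m hp hm ((lt_append_of_lt hpq v).trans_le hmle) hperm hmlt)
  rw [← hpqu, append_assoc]
  exact (append_le_append_left_iff p).mpr hmle

theorem lie_lyndonBracket_lie_mem_span_of_gt {p q u v : List α} (hp : IsLyndon p)
    (hq : IsLyndon q) (hv : IsLyndon v) (hpq : p < q) (hqv : q < v) (hpqu : p ++ q = u)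
    (hpv : ⁅lyndonBracket R p, lyndonBracket R v⁆ ∈
      Submodule.span R (lyndonBracket R '' lyndonWordsBetween p v))
    (ih : ∀ x y, IsLyndon x → IsLyndon y → x < y → x ++ y ~ u ++ v → y < v →
      ⁅lyndonBracket R x, lyndonBracket R y⁆ ∈
        Submodule.span R (lyndonBracket R '' lyndonWordsBetween x y)) :
    ⁅lyndonBracket R q, ⁅lyndonBracket R p, lyndonBracket R v⁆⁆ ∈
      Submodule.span R (lyndonBracket R '' lyndonWordsBetween u v) := by
  refine Submodule.lie_mem_of_mem_span ?_ hpv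
  rintro _ ⟨m, ⟨hm, hmp, hmle, hmlt⟩, rfl⟩
  rcases lt_trichotomy q m with hqm | rfl | hmq
  · have hperm : q ++ m ~ u ++ v := by
      rw [← hpqu, append_assoc]
      exact (hmp.append_left q).trans (by simpa using perm_append_comm.append_right v)
    refine span_lyndonWordsBetween_mono R hperm (le_of_lt ?_) hmlt.le
      (ih q m hq hm hqm hperm hmlt)
    calc u ++ v = (p ++ q) ++ v := by rw [hpqu]
      _ < (q ++ p) ++ v := append_lt_append_of_lt_of_length_eq
          (hq.append_lt_append_comm hp.1 hpq) (by simp [add_comm]) v v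
      _ ≤ q ++ m := by
          rw [append_assoc]
          exact (append_le_append_left_iff q).mpr hmle
  · rw [lie_self]
    exact zero_mem _
  · have hperm : m ++ q ~ u ++ v := by
      rw [← hpqu, append_assoc]
      exact (hmp.append_right q).trans
        (by rw [append_assoc]; exact perm_append_comm.append_left p)
    rw [← lie_skew]
    refine neg_mem (span_lyndonWordsBetween_mono R hperm (le_of_lt ?_) hqv.le
      (ih m q hm hq hmq hperm hqv))
    calc u ++ v = p ++ (q ++ v) := by rw [← hpqu, append_assoc]
      _ < p ++ (v ++ q) := (append_lt_append_left_iff p).mpr (hv.append_lt_append_comm hq.1 hqv)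
      _ = (p ++ v) ++ q := (append_assoc _ _ _).symm
      _ ≤ m ++ q := append_le_append_of_le_of_length_eq hmle hmp.length_eq.symm le_rfl

theorem lie_lyndonBracket_mem_span {u v : List α} (hu : IsLyndon u) (hv : IsLyndon v)
    (huv : u < v) : ⁅lyndonBracket R u, lyndonBracket R v⁆ ∈
      Submodule.span R (lyndonBracket R '' lyndonWordsBetween u v) := by
  -- Induction on `(u ++ v).length`, then, with the letters of `u ++ v` fixed, on `v` among the
  -- finitely many subpermutations of `u ++ v`.
  suffices H : ∀ n (W : List α), W.length = n → ∀ v, v <+~ W → ∀ u, IsLyndon u → IsLyndon v →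
      u < v → u ++ v ~ W → ⁅lyndonBracket R u, lyndonBracket R v⁆ ∈
        Submodule.span R (lyndonBracket R '' lyndonWordsBetween u v) from
    H _ _ rfl v (suffix_append u v).sublist.subperm u hu hv huv (Perm.refl _)
  intro n
  induction n using Nat.strong_induction_on with | _ n ihn => ?_
  intro W hW v hvW
  apply (finite_setOf_subperm W).wellFoundedOn.induction (r := (· < ·)) hvW
  intro v _ ihv u hu hv huv hperm
  by_cases hstd : u.length = 1 ∨ v ≤ stdRight u
  · rw [lie_lyndonBracket_eq_of_le_stdRight R hu hv hstd]
    exact Submodule.subset_span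
      ⟨u ++ v, ⟨hu.append hv huv, Perm.refl _, le_rfl, hv.append_lt hu.1 huv⟩, rfl⟩
  obtain ⟨hu1, hqv⟩ := not_or.mp hstd
  have h2 : 2 ≤ u.length := by
    have := length_pos_iff.mpr hu.1
    omega
  have hpq := stdLeft_append_stdRight h2
  have hp := hu.isLyndon_stdLeft h2
  have hq := isLyndon_stdRight h2
  have hpq_lt : stdLeft u < stdRight u :=
    (lt_of_le_of_ne (le_of_prefix ⟨_, hpq⟩) fun h => hq.1 (by simpa [h] using hpq)).trans
      (hu.lt_stdRight h2)
  have ih : ∀ x y, IsLyndon x → IsLyndon y → x < y → x ++ y ~ u ++ v → y < v →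
      ⁅lyndonBracket R x, lyndonBracket R y⁆ ∈
        Submodule.span R (lyndonBracket R '' lyndonWordsBetween x y) :=
    fun x y hx hy hxy hxyuv hyv => ihv y
      ((suffix_append x y).sublist.subperm.trans (hxyuv.trans hperm).subperm) hyv
      x hx hy hxy (hxyuv.trans hperm)
  rw [lyndonBracket_of_two_le_length R h2, lie_lie]
  refine sub_mem (lie_lyndonBracket_lie_mem_span_of_lt R hp hpq_lt hpq ?_ ih)
    (lie_lyndonBracket_lie_mem_span_of_gt R hp hq hv hpq_lt (not_le.mp hqv) hpq ?_ ih)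
  · exact ihn _ (by simpa [← hW, ← hperm.length_eq] using stdRight_length_lt h2) _ rfl v
      (suffix_append _ v).sublist.subperm _ hq hv (not_le.mp hqv) (Perm.refl _)
  · exact ihn _ (by simpa [← hW, ← hperm.length_eq] using stdLeft_length_lt h2) _ rfl v
      (suffix_append _ v).sublist.subperm _ hp hv (hpq_lt.trans (not_le.mp hqv)) (Perm.refl _)

theorem span_lyndonBracket :
    Submodule.span R (lyndonBracket R '' {w : List α | IsLyndon w}) = ⊤ := by
  set S := Submodule.span R (lyndonBracket R '' {w : List α | IsLyndon w})
  have hpair : ∀ u v : List α, IsLyndon u → IsLyndon v →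
      ⁅lyndonBracket R u, lyndonBracket R v⁆ ∈ S := by
    have hmono : ∀ u v : List α, Submodule.span R (lyndonBracket R '' lyndonWordsBetween u v) ≤ S :=
      fun u v => Submodule.span_mono (Set.image_mono fun l hl => hl.1)
    intro u v hu hv
    rcases lt_trichotomy u v with h | rfl | h
    · exact hmono u v (lie_lyndonBracket_mem_span R hu hv h)
    · rw [lie_self]
      exact zero_mem S
    · rw [← lie_skew]
      exact neg_mem (hmono v u (lie_lyndonBracket_mem_span R hv hu h))
  have hleft : ∀ u, IsLyndon u → ∀ y ∈ S, ⁅lyndonBracket R u, y⁆ ∈ S := fun u hu _ hy =>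
    Submodule.lie_mem_of_mem_span (by rintro _ ⟨v, hv, rfl⟩; exact hpair u v hu hv) hy
  let K : LieSubalgebra R (FreeLieAlgebra R α) :=
    { S with
      lie_mem' := fun {x y} hx hy => by
        rw [← lie_skew]
        refine neg_mem (Submodule.lie_mem_of_mem_span ?_ hx)
        rintro _ ⟨u, hu, rfl⟩
        rw [← lie_skew]
        exact neg_mem (hleft u hu y hy) }
  refine eq_top_iff.mpr fun u _ => mem_of_forall_of_mem K (fun a => ?_) u
  rw [← lyndonBracket_singleton R]
  exact Submodule.subset_span ⟨[a], isLyndon_singleton a, rfl⟩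

end FreeLieAlgebra

namespace MonoidAlgebra

open FreeMonoid

variable {R α : Type*}

theorem exists_mul_eq_of_coeff_mul_ne_zero {M : Type*} [Semiring R] [Monoid M]
    {f g : MonoidAlgebra R M} {m : M} (h : (f * g).coeff m ≠ 0) :
    ∃ y z, f.coeff y ≠ 0 ∧ g.coeff z ≠ 0 ∧ y * z = m := by
  classical
  obtain ⟨y, hy, z, hz, rfl⟩ :=
    Finset.mem_mul.mp (support_coeff_mul_subset f g (Finsupp.mem_support_iff.mpr h))
  exact ⟨y, z, Finsupp.mem_support_iff.mp hy, Finsupp.mem_support_iff.mp hz, rfl⟩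

theorem coeff_mul_ofList_append [Semiring R] {f : MonoidAlgebra R (FreeMonoid α)} {u : List α}
    (hf : ∀ y, f.coeff y ≠ 0 → y.toList.length = u.length) (g : MonoidAlgebra R (FreeMonoid α))
    (v : List α) :
    (f * g).coeff (ofList (u ++ v)) = f.coeff (ofList u) * g.coeff (ofList v) := by
  classical
  rw [coeff_mul, Finsupp.sum_eq_single (ofList u), Finsupp.sum_eq_single (ofList v)]
  · simp [ofList_append]
  · intro z _ hz
    rw [if_neg (fun h => hz (mul_left_cancel (h.trans (ofList_append u v))))]
  · simp
  · intro y hy hyu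
    refine Finset.sum_eq_zero fun z _ => if_neg fun h => hyu ?_
    have h' : y.toList ++ z.toList = u ++ v := congrArg toList h
    rw [← ofList_toList y, (List.append_inj h' (hf y hy)).1]
  · simp

theorem forall_mem_eq_of_commute_single_of [Semiring R] {g : MonoidAlgebra R (FreeMonoid α)}
    {i : α} (hg : Commute g (single (FreeMonoid.of i) 1)) {w : List α}
    (hw : g.coeff (ofList w) ≠ 0) :
    ∀ a ∈ w, a = i := by
  -- Comparing the coefficients of `g * xᵢ` and `xᵢ * g` at `w ++ [i]`: every word in the support
  -- starts with `i`, and its rotation by one letter is again in the support.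
  have step : ∀ a w', g.coeff (ofList (a :: w')) ≠ 0 →
      a = i ∧ g.coeff (ofList (w' ++ [a])) ≠ 0 := by
    intro a w' h
    have key : (single (FreeMonoid.of i) 1 * g).coeff (ofList (a :: w') * FreeMonoid.of i) =
        g.coeff (ofList (a :: w')) := by
      rw [← hg.eq, coeff_mul_single_mul, mul_one]
    by_cases hai : a = i
    · subst hai
      refine ⟨rfl, ?_⟩
      rw [ofList_cons, mul_assoc, coeff_single_mul_mul, one_mul, ← ofList_singleton,
        ← ofList_append] at key
      rwa [key]
    · rw [coeff_single_mul_of_forall_mul_ne] at key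
      · exact absurd key.symm h
      · intro d hd
        exact hai (by simpa using congrArg (fun m => (toList m).head?) hd.symm)
  have hrot : ∀ k, g.coeff (ofList (w.rotate k)) ≠ 0 := by
    intro k
    induction k with
    | zero => simpa using hw
    | succ k ih =>
      rw [← List.rotate_rotate]
      rcases h : w.rotate k with _ | ⟨a, w'⟩
      · simpa [h] using ih
      · rw [h] at ih
        simpa using (step a w' ih).2
  intro a ha
  obtain ⟨j, hj, rfl⟩ := List.getElem_of_mem ha
  have hlen : 0 < (w.rotate j).length := by simp; omega
  have hhead := List.getElem_rotate w j 0 hlen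
  rcases h : w.rotate j with _ | ⟨b, w'⟩
  · simp [h] at hlen
  · have := (step b w' (h ▸ hrot j)).1
    simp [h, Nat.mod_eq_of_lt hj] at hhead
    rw [← hhead, this]


section LeadingWord

variable [LinearOrder α]

/-- `f` is homogeneous of degree `w.length`, and `w` is the least word in its support, with
coefficient `1`. -/
def HasLeadingWord [Semiring R] (f : MonoidAlgebra R (FreeMonoid α)) (w : List α) : Prop :=
  f.coeff (ofList w) = 1 ∧ ∀ y, f.coeff y ≠ 0 → y.toList.length = w.length ∧ w ≤ y.toList

theorem hasLeadingWord_single_of [Semiring R] (a : α) :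
    HasLeadingWord (single (FreeMonoid.of a) (1 : R)) [a] := by
  refine ⟨by simp, fun y hy => ?_⟩
  classical
  obtain rfl : y = FreeMonoid.of a := by
    by_contra hne
    exact hy (by simp [Ne.symm hne])
  simp

theorem HasLeadingWord.commutator [Ring R] {f g : MonoidAlgebra R (FreeMonoid α)} {u v : List α}
    (hf : HasLeadingWord f u) (hg : HasLeadingWord g v) (huv : u ++ v < v) :
    HasLeadingWord (f * g - g * f) (u ++ v) := by
  have hfg : ∀ m, (f * g).coeff m ≠ 0 → m.toList.length = (u ++ v).length ∧ u ++ v ≤ m.toList := by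
    intro m hm
    obtain ⟨y, z, hy, hz, rfl⟩ := exists_mul_eq_of_coeff_mul_ne_zero hm
    obtain ⟨hyl, hyu⟩ := hf.2 y hy
    obtain ⟨hzl, hzv⟩ := hg.2 z hz
    simpa [hyl, hzl] using List.append_le_append_of_le_of_length_eq hyu hyl.symm hzv
  have hgf : ∀ m, (g * f).coeff m ≠ 0 → m.toList.length = (u ++ v).length ∧ u ++ v < m.toList := by
    intro m hm
    obtain ⟨z, y, hz, hy, rfl⟩ := exists_mul_eq_of_coeff_mul_ne_zero hm
    obtain ⟨hyl, -⟩ := hf.2 y hy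
    obtain ⟨hzl, hzv⟩ := hg.2 z hz
    exact ⟨by simp [hyl, hzl, add_comm], by simpa using List.lt_append_of_lt (huv.trans_le hzv) _⟩
  refine ⟨?_, fun m hm => ?_⟩
  · have hgf0 : (g * f).coeff (ofList (u ++ v)) = 0 := by
      by_contra h
      exact (hgf _ h).2.ne rfl
    rw [coeff_sub, Finsupp.sub_apply, hgf0, sub_zero,
      coeff_mul_ofList_append (fun y hy => (hf.2 y hy).1), hf.1, hg.1, one_mul]
  · rw [coeff_sub, Finsupp.sub_apply] at hm
    by_cases h : (f * g).coeff m = 0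
    · rw [h, zero_sub, neg_ne_zero] at hm
      exact (hgf m hm).imp_right le_of_lt
    · exact hfg m h

end LeadingWord

end MonoidAlgebra

namespace FreeLieAlgebra

open MonoidAlgebra List

attribute [local instance] LieRing.ofAssociativeRing

variable (R : Type*) {α : Type*} [CommRing R]

noncomputable def toFreeMonoidAlgebra : FreeLieAlgebra R α →ₗ⁅R⁆ MonoidAlgebra R (FreeMonoid α) :=
  lift R fun a => single (FreeMonoid.of a) 1

theorem toFreeMonoidAlgebra_of (a : α) :
    toFreeMonoidAlgebra R (of R a) = single (FreeMonoid.of a) 1 :=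
  lift_of_apply _ a

variable [LinearOrder α]

theorem hasLeadingWord_lyndonBracket {w : List α} (hw : IsLyndon w) :
    HasLeadingWord (toFreeMonoidAlgebra R (lyndonBracket R w)) w := by
  induction h : w.length using Nat.strong_induction_on generalizing w with | _ n ih => ?_
  by_cases h2 : 2 ≤ w.length
  · have hsplit := stdLeft_append_stdRight h2
    have hbracket := (ih _ (h ▸ stdLeft_length_lt h2) (hw.isLyndon_stdLeft h2) rfl).commutator
      (ih _ (h ▸ stdRight_length_lt h2) (isLyndon_stdRight h2) rfl)
      (by rw [hsplit]; exact hw.lt_stdRight h2)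
    rwa [hsplit, ← Ring.lie_def, ← LieHom.map_lie, ← lyndonBracket_of_two_le_length R h2]
      at hbracket
  · have := length_pos_iff.mpr hw.1
    obtain ⟨a, rfl⟩ : ∃ a, w = [a] := length_eq_one_iff.mp (by omega)
    rw [lyndonBracket_singleton, toFreeMonoidAlgebra_of]
    exact hasLeadingWord_single_of a

theorem coeff_toFreeMonoidAlgebra_linearCombination {c : List α →₀ R}
    (hc : ∀ l ∈ c.support, IsLyndon l) {l₀ : List α} (hl₀ : l₀ ∈ c.support)
    (hmin : ∀ l ∈ c.support, l₀ ≤ l) :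
    (toFreeMonoidAlgebra R (Finsupp.linearCombination R (lyndonBracket R) c)).coeff
      (FreeMonoid.ofList l₀) = c l₀ := by
  rw [Finsupp.linearCombination_apply, map_finsuppSum, coeff_finsuppSum, Finsupp.sum_apply,
    Finsupp.sum_eq_single l₀]
  · simp [(hasLeadingWord_lyndonBracket R (hc l₀ hl₀)).1]
  · intro l hcl hne
    have hl := Finsupp.mem_support_iff.mpr hcl
    have hcoeff : (toFreeMonoidAlgebra R (lyndonBracket R l)).coeff (FreeMonoid.ofList l₀) = 0 := by
      by_contra h
      exact hne (le_antisymm ((hasLeadingWord_lyndonBracket R (hc l hl)).2 _ h).2 (hmin l hl))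
    simp [hcoeff]
  · simp

theorem exists_eq_smul_of_lie_of_eq_zero {i : α} {u : FreeLieAlgebra R α}
    (h : ⁅u, of R i⁆ = 0) : ∃ m : R, u = m • of R i := by
  classical
  obtain ⟨c, hc, rfl⟩ := (Finsupp.mem_span_image_iff_linearCombination R).mp
    ((span_lyndonBracket R (α := α)).symm ▸ Submodule.mem_top (x := u))
  refine ⟨c [i], ?_⟩
  set c' := c.erase [i]
  have hsplit : Finsupp.linearCombination R (lyndonBracket R) c =
      Finsupp.linearCombination R (lyndonBracket R) c' + c [i] • of R i := by
    rw [← lyndonBracket_singleton, ← Finsupp.linearCombination_single, ← map_add,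
      Finsupp.erase_add_single]
  suffices c' = 0 by rw [hsplit, this, map_zero, zero_add]
  -- otherwise the least word in the support of `c'` is a Lyndon power of `i`, hence `[i]`
  by_contra hne
  have hsupp : c'.support.Nonempty := Finsupp.support_nonempty_iff.mpr hne
  have hl₀ := c'.support.min'_mem hsupp
  have hLyndon : ∀ l ∈ c'.support, IsLyndon l := by
    intro l hl
    rw [Finsupp.support_erase] at hl
    exact (Finsupp.mem_supported R c).mp hc (Finset.mem_of_mem_erase hl)
  have hlie : ⁅Finsupp.linearCombination R (lyndonBracket R) c', of R i⁆ = 0 := by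
    rw [eq_sub_of_add_eq hsplit.symm, sub_lie, h, smul_lie, lie_self, smul_zero, sub_zero]
  have hcomm : Commute (toFreeMonoidAlgebra R (Finsupp.linearCombination R (lyndonBracket R) c'))
      (single (FreeMonoid.of i) 1) := by
    rw [commute_iff_lie_eq, ← toFreeMonoidAlgebra_of, ← LieHom.map_lie, hlie, map_zero]
  have hcoeff := coeff_toFreeMonoidAlgebra_linearCombination R hLyndon hl₀
    (fun l hl => c'.support.min'_le l hl)
  have hi := (hLyndon _ hl₀).eq_singleton_of_forall_eq
    (forall_mem_eq_of_commute_single_of hcomm (hcoeff ▸ Finsupp.mem_support_iff.mp hl₀))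
  rw [hi, Finsupp.support_erase] at hl₀
  exact Finset.notMem_erase _ _ hl₀

end FreeLieAlgebra

theorem centralizer_of_generator_free_lie_general {n : ℕ} (i : Fin n)
    (u : FreeLieAlgebra ℤ (Fin n)) (h : ⁅u, FreeLieAlgebra.of ℤ i⁆ = 0) :
    ∃ m : ℤ, u = m • FreeLieAlgebra.of ℤ i :=
  FreeLieAlgebra.exists_eq_smul_of_lie_of_eq_zero ℤ h

/-- In the free Lie ring on `n ≥ 2` generators, the centralizer of a generator `x_i`
is `ℤ·x_i`. -/
theorem centralizer_of_generator_free_lie {n : ℕ} (hn : 2 ≤ n) (i : Fin n)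
    (u : FreeLieAlgebra ℤ (Fin n)) (h : ⁅u, FreeLieAlgebra.of ℤ i⁆ = 0) :
    ∃ m : ℤ, u = m • FreeLieAlgebra.of ℤ i :=
  centralizer_of_generator_free_lie_general i u h
end

section
/- Let G be a group and σ an automorphism of G with σ(g)g⁻¹ ∈ Γ_{j+1}(G) for all g ∈ G. Then for every i ≥ 1, σ(g)g⁻¹ ∈ Γ_{i+j}(G) for all g ∈ Γ_i(G). -/
/-! Induction on `i`, with Lean's indexing `Γ_0 = G`. The `g` with `σ g ≡ g` modulo a normal
subgroup form a subgroup, and `Γ_{i+1}` is generated by commutators `⁅x, y⁆` with `x ∈ Γ_i`, so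
it suffices to treat those. Modulo `Γ_{i+j+1}` write `σ x = a x` and `σ y = b y`: then `a ∈ Γ_{i+j}`
is central, and `b ∈ Γ_j` commutes with `x` and with `⁅x, y⁆` because `⁅Γ_m, Γ_n⁆ ≤ Γ_{m+n+1}`
(a consequence of the three subgroups lemma). Hence `σ ⁅x, y⁆ = ⁅a x, b y⁆ = ⁅x, y⁆`. -/

open scoped commutatorElement

theorem commutatorElement_mul_mul_of_commute {Q : Type*} [Group Q] {a b x y : Q}
    (ha : ∀ q, Commute a q) (hxb : Commute x b) (hcb : Commute ⁅x, y⁆ b) :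
    ⁅a * x, b * y⁆ = ⁅x, y⁆ :=
  calc ⁅a * x, b * y⁆ = a * (x * b * y * x⁻¹) * a⁻¹ * y⁻¹ * b⁻¹ := by
        rw [commutatorElement_def]; group
    _ = x * b * (y * x⁻¹ * y⁻¹) * b⁻¹ := by rw [(ha _).eq]; group
    _ = b * ⁅x, y⁆ * b⁻¹ := by rw [hxb.eq, commutatorElement_def]; group
    _ = ⁅x, y⁆ := by rw [← hcb.eq, mul_inv_cancel_right]

namespace Subgroup

variable {G : Type*} [Group G]

theorem commutator_commutator_le_of_rotate_s15 {H₁ H₂ H₃ N : Subgroup G} [N.Normal]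
    (h₁ : ⁅⁅H₂, H₃⁆, H₁⁆ ≤ N) (h₂ : ⁅⁅H₃, H₁⁆, H₂⁆ ≤ N) : ⁅⁅H₁, H₂⁆, H₃⁆ ≤ N := by
  have le_iff_map_eq_bot : ∀ K₁ K₂ K₃ : Subgroup G, ⁅⁅K₁, K₂⁆, K₃⁆ ≤ N ↔
      ⁅⁅K₁.map (QuotientGroup.mk' N), K₂.map (QuotientGroup.mk' N)⁆,
        K₃.map (QuotientGroup.mk' N)⁆ = ⊥ := fun K₁ K₂ K₃ => by
    rw [← map_commutator, ← map_commutator, map_eq_bot_iff, QuotientGroup.ker_mk']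
  rw [le_iff_map_eq_bot] at h₁ h₂ ⊢
  exact commutator_commutator_eq_bot_of_rotate h₁ h₂

theorem commutator_lowerCentralSeries_le (m n : ℕ) :
    ⁅(⊤ : Subgroup G).lowerCentralSeries m, (⊤ : Subgroup G).lowerCentralSeries n⁆ ≤
      (⊤ : Subgroup G).lowerCentralSeries (m + n + 1) := by
  induction n generalizing m with
  | zero => rfl
  | succ n ih =>
    rw [lowerCentralSeries_succ, commutator_comm]
    apply commutator_commutator_le_of_rotate_s15
    · rw [commutator_comm ⊤, ← lowerCentralSeries_succ]
      exact (ih (m + 1)).trans_eq (by rw [Nat.add_right_comm m 1 n, Nat.add_assoc m n 1])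
    · exact commutator_mono (ih m) le_rfl

theorem commute_mk'_of_mem_lowerCentralSeries {m n k : ℕ} {g h : G} (hk : k ≤ m + n + 1)
    (hg : g ∈ (⊤ : Subgroup G).lowerCentralSeries m)
    (hh : h ∈ (⊤ : Subgroup G).lowerCentralSeries n) :
    Commute (QuotientGroup.mk' ((⊤ : Subgroup G).lowerCentralSeries k) g)
      (QuotientGroup.mk' _ h) := by
  rw [← commutatorElement_eq_one_iff_commute, ← map_commutatorElement, ← MonoidHom.mem_ker,
    QuotientGroup.ker_mk']
  exact lowerCentralSeries_antitone ⊤ hk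
    (commutator_lowerCentralSeries_le m n (commutator_mem_commutator hg hh))

theorem mk'_map_commutatorElement_eq {F : Type*} [FunLike F G G] [MonoidHomClass F G G]
    {σ : F} {i j : ℕ} (hσ : ∀ g : G, σ g * g⁻¹ ∈ (⊤ : Subgroup G).lowerCentralSeries j)
    {x : G} (hx : x ∈ (⊤ : Subgroup G).lowerCentralSeries i)
    (hσx : σ x * x⁻¹ ∈ (⊤ : Subgroup G).lowerCentralSeries (i + j)) (y : G) :
    QuotientGroup.mk' ((⊤ : Subgroup G).lowerCentralSeries (i + 1 + j)) (σ ⁅x, y⁆) =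
      QuotientGroup.mk' _ ⁅x, y⁆ := by
  set π := QuotientGroup.mk' ((⊤ : Subgroup G).lowerCentralSeries (i + 1 + j))
  have hπσ : ∀ g : G, π (σ g) = π (σ g * g⁻¹) * π g := fun g => by
    rw [← map_mul, inv_mul_cancel_right]
  have hxy : ⁅x, y⁆ ∈ (⊤ : Subgroup G).lowerCentralSeries (i + 1) :=
    commutator_mem_commutator hx (mem_top y)
  rw [map_commutatorElement, map_commutatorElement, hπσ x, hπσ y]
  refine commutatorElement_mul_mul_of_commute (fun q => ?_) ?_ ?_
  · obtain ⟨z, rfl⟩ := QuotientGroup.mk'_surjective _ q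
    exact commute_mk'_of_mem_lowerCentralSeries (n := 0) (by omega) hσx (mem_top z)
  · exact commute_mk'_of_mem_lowerCentralSeries (by omega) hx (hσ y)
  · rw [← map_commutatorElement]
    exact commute_mk'_of_mem_lowerCentralSeries (by omega) hxy (hσ y)

end Subgroup

/-- If `σ ∈ Aut G` satisfies `σ(g)g⁻¹ ∈ Γ_{j+1}(G)` for all `g ∈ G`, then
`σ(g)g⁻¹ ∈ Γ_{i+j}(G)` for all `g ∈ Γ_i(G)` (0-based: Lean index `i` is `Γ_{i+1}`,
so the conclusion reads: `g ∈ lowerCentralSeries G i → σ g * g⁻¹ ∈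
lowerCentralSeries G (i + j)`). -/
theorem andreadakis_action_on_lcs {G : Type*} [Group G] (j : ℕ) (σ : MulAut G)
    (hσ : ∀ g : G, σ g * g⁻¹ ∈ (⊤ : Subgroup G).lowerCentralSeries j) :
    ∀ i : ℕ, ∀ g ∈ (⊤ : Subgroup G).lowerCentralSeries i, σ g * g⁻¹ ∈ (⊤ : Subgroup G).lowerCentralSeries (i + j) := by
  intro i
  induction i with
  | zero => exact fun g _ => by simpa using hσ g
  | succ i ih =>
    have hle : (⊤ : Subgroup G).lowerCentralSeries (i + 1) ≤
        ((QuotientGroup.mk' _).comp σ.toMonoidHom).eqLocus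
          (QuotientGroup.mk' ((⊤ : Subgroup G).lowerCentralSeries (i + 1 + j))) :=
      Subgroup.commutator_le.2 fun x hx y _ =>
        Subgroup.mk'_map_commutatorElement_eq hσ hx (ih x hx) y
    intro g hg
    rw [← div_eq_mul_inv, ← QuotientGroup.eq_iff_div_mem]
    exact hle hg
end

section
/- Let K_* act on G_* in the category of strongly central filtrations, i.e. K₁ acts on G₁ by automorphisms preserving each G_i, with [K_i, G_j] ⊆ G_{i+j} in the semidirect product for all i,j. Then the map τ sending k ∈ K_i to the degree-i map of graded abelian groups G_j/G_{j+1} → G_{i+j}/G_{i+j+1}, g ↦ class of (k·g)g⁻¹, induces a well-defined homomorphism from K_i/K_{i+1} to degree-i derivations of the graded Lie ring Lie(G_*). -/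
/-!
Write `⁅σ, g⁆ = σ g * g⁻¹` for the commutator in the holomorph `G ⋊ MulAut G`. Each of the five
claims is an equation in a quotient `G ⧸ A n`. It comes from an exact identity (the cocycle rules
`⁅σ, g h⁆ = ⁅σ, g⁆ · g ⁅σ, h⁆ g⁻¹` and `⁅σ τ, g⁆ = σ ⁅τ, g⁆ · ⁅σ, g⁆`, or the expansion of
`⁅u g, v g'⁆`), once strong centrality shows that each correction term, and each commutator
needed to reorder factors, lies deep enough in the filtration to vanish in that quotient.
-/

open scoped commutatorElement

section JohnsonMorphism

variable {G : Type*} [Group G]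

theorem QuotientGroup.mk_commutatorElement (N : Subgroup G) [N.Normal] (x y : G) :
    ((⁅x, y⁆ : G) : G ⧸ N) = ⁅(x : G ⧸ N), (y : G ⧸ N)⁆ :=
  rfl

theorem commutatorElement_mul_mul_of_commute_s17 {u g v g' : G} (huv : Commute u v)
    (hu_gv : Commute u ⁅g, v⁆) (hu_gg' : Commute u ⁅g, g'⁆) (hv_gg' : Commute v ⁅g, g'⁆)
    (hv_ug' : Commute v ⁅u, g'⁆) (hgg'_ug' : Commute ⁅g, g'⁆ ⁅u, g'⁆)
    (hug'_gv : Commute ⁅u, g'⁆ ⁅g, v⁆) :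
    ⁅u * g, v * g'⁆ = ⁅u, g'⁆ * ⁅g, v⁆ * ⁅g, g'⁆ := by
  calc ⁅u * g, v * g'⁆
      = u * (⁅g, v⁆ * (v * ⁅g, g'⁆ * v⁻¹)) * u⁻¹ * (⁅u, v⁆ * (v * ⁅u, g'⁆ * v⁻¹)) := by
        simp only [commutatorElement_def]; group
    _ = ⁅g, v⁆ * (⁅g, g'⁆ * ⁅u, g'⁆) := by
        rw [hv_gg'.mul_inv_cancel, hv_ug'.mul_inv_cancel, (hu_gv.mul_right hu_gg').mul_inv_cancel,
          commutatorElement_eq_one_iff_commute.mpr huv, one_mul, mul_assoc]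
    _ = ⁅u, g'⁆ * ⁅g, v⁆ * ⁅g, g'⁆ := by
        rw [hgg'_ug'.eq, ← mul_assoc, hug'_gv.eq]

/-- Indices are `0`-based: `A i` is the paper's `G_{i+1}`. -/
def IsStronglyCentral (A : ℕ → Subgroup G) : Prop :=
  ∀ i j, ∀ x ∈ A i, ∀ y ∈ A j, ⁅x, y⁆ ∈ A (i + j + 1)

namespace IsStronglyCentral

variable {A : ℕ → Subgroup G}

theorem normal (hA0 : A 0 = ⊤) (hA : Antitone A) (hsc : IsStronglyCentral A) (n : ℕ) :
    (A n).Normal where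
  conj_mem g hg x := by
    have hxg : ⁅x, g⁆ ∈ A n := hA (by omega) (hsc 0 n x (hA0 ▸ Subgroup.mem_top x) g hg)
    simpa only [commutatorElement_def, inv_mul_cancel_right] using mul_mem hxg hg

theorem mk_commute [∀ n, (A n).Normal] (hA : Antitone A) (hsc : IsStronglyCentral A)
    {i j n : ℕ} {x y : G} (hx : x ∈ A i) (hy : y ∈ A j) (h : n ≤ i + j + 1) :
    Commute (x : G ⧸ A n) (y : G ⧸ A n) := by
  rw [← commutatorElement_eq_one_iff_commute, ← QuotientGroup.mk_commutatorElement,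
    QuotientGroup.eq_one_iff]
  exact hA h (hsc i j x hx y hy)

end IsStronglyCentral

def autComm (σ : MulAut G) (g : G) : G :=
  σ g * g⁻¹

theorem autComm_mul_right (σ : MulAut G) (g h : G) :
    autComm σ (g * h) = autComm σ g * (g * autComm σ h * g⁻¹) := by
  simp only [autComm, map_mul]; group

theorem autComm_mul_left (σ τ : MulAut G) (g : G) :
    autComm (σ * τ) g = σ (autComm τ g) * autComm σ g := by
  simp only [autComm, MulAut.mul_apply, map_mul, map_inv]; group

theorem apply_eq_autComm_mul (σ : MulAut G) (g : G) : σ g = autComm σ g * g := by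
  simp only [autComm, inv_mul_cancel_right]

theorem autComm_commutatorElement (σ : MulAut G) (g g' : G) :
    autComm σ ⁅g, g'⁆ = ⁅autComm σ g * g, autComm σ g' * g'⁆ * ⁅g, g'⁆⁻¹ := by
  rw [← apply_eq_autComm_mul, ← apply_eq_autComm_mul, ← map_commutatorElement]; rfl

/-- `σ` behaves like an element of the paper's `K_{i+1}`: `[σ, G_{j+1}] ⊆ G_{i+j+2}`. -/
def ActsInDegree (A : ℕ → Subgroup G) (i : ℕ) (σ : MulAut G) : Prop :=
  ∀ j, ∀ g ∈ A j, autComm σ g ∈ A (i + j + 1)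

namespace ActsInDegree

variable {A : ℕ → Subgroup G} {σ τ : MulAut G} {i j : ℕ} {g g' : G}

theorem apply_mem (hA : Antitone A) (hσ : ActsInDegree A i σ) (hg : g ∈ A j) : σ g ∈ A j := by
  rw [apply_eq_autComm_mul]
  exact mul_mem (hA (by omega) (hσ j g hg)) hg

variable [∀ n, (A n).Normal]

theorem mk_autComm_eq_of_mk_eq (hσ : ActsInDegree A i σ) (h : (g : G ⧸ A (j + 1)) = g') :
    ((autComm σ g : G) : G ⧸ A (i + j + 2)) = ↑(autComm σ g') := by
  rw [QuotientGroup.eq] at h ⊢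
  rw [← mul_inv_cancel_left g g', autComm_mul_right, inv_mul_cancel_left]
  exact Subgroup.Normal.conj_mem inferInstance _ (hσ (j + 1) _ h) g

theorem mk_autComm_mul (hA : Antitone A) (hsc : IsStronglyCentral A)
    (hσ : ActsInDegree A i σ) {j' : ℕ} (hg : g ∈ A j) (hg' : g' ∈ A j') :
    ((autComm σ (g * g') : G) : G ⧸ A (i + j + 2)) = ↑(autComm σ g) * ↑(autComm σ g') := by
  have hcomm := hsc.mk_commute (n := i + j + 2) hA hg (hσ j' g' hg') (by omega)
  rw [autComm_mul_right, QuotientGroup.mk_mul, QuotientGroup.mk_mul, QuotientGroup.mk_mul,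
    hcomm.eq, QuotientGroup.mk_inv, mul_inv_cancel_right]

theorem mk_autComm_commutatorElement (hA : Antitone A) (hsc : IsStronglyCentral A)
    (hσ : ActsInDegree A i σ) {j' : ℕ} (hg : g ∈ A j) (hg' : g' ∈ A j') :
    ((autComm σ ⁅g, g'⁆ : G) : G ⧸ A (i + j + j' + 3)) =
      ↑(⁅autComm σ g, g'⁆ * ⁅g, autComm σ g'⁆) := by
  have hu := hσ j g hg
  have hv := hσ j' g' hg'
  have hc := hsc j j' g hg g' hg'
  have hp := hsc _ j' _ hu g' hg'
  have hq := hsc j _ g hg _ hv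
  have comm {m m' : ℕ} {x y : G} (hx : x ∈ A m) (hy : y ∈ A m')
      (h : i + j + j' + 3 ≤ m + m' + 1) := hsc.mk_commute hA hx hy h
  rw [autComm_commutatorElement, QuotientGroup.mk_mul, QuotientGroup.mk_inv]
  simp only [QuotientGroup.mk_commutatorElement, QuotientGroup.mk_mul]
  rw [commutatorElement_mul_mul_of_commute_s17 (comm hu hv (by omega)) (comm hu hq (by omega))
    (comm hu hc (by omega)) (comm hv hc (by omega)) (comm hv hp (by omega))
    (comm hc hp (by omega)) (comm hp hq (by omega)), mul_inv_cancel_right]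

theorem mk_autComm_mul_left_of_succ (hA : Antitone A) (hσ : ActsInDegree A i σ)
    (hτ : ActsInDegree A (i + 1) τ) (hg : g ∈ A j) :
    ((autComm (σ * τ) g : G) : G ⧸ A (i + j + 2)) = ↑(autComm σ g) := by
  have hτg : autComm τ g ∈ A (i + j + 2) := hA (by omega) (hτ j g hg)
  rw [autComm_mul_left, QuotientGroup.mk_mul,
    (QuotientGroup.eq_one_iff _).mpr (hσ.apply_mem hA hτg), one_mul]

theorem mk_autComm_mul_left (hA : Antitone A) (hsc : IsStronglyCentral A)
    (hσ : ActsInDegree A i σ) (hτ : ActsInDegree A i τ) (hg : g ∈ A j) :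
    ((autComm (σ * τ) g : G) : G ⧸ A (i + j + 2)) = ↑(autComm σ g) * ↑(autComm τ g) := by
  have hτg := hτ j g hg
  have hστg : autComm σ (autComm τ g) ∈ A (i + j + 2) := hA (by omega) (hσ _ _ hτg)
  rw [autComm_mul_left, apply_eq_autComm_mul σ, QuotientGroup.mk_mul, QuotientGroup.mk_mul,
    (QuotientGroup.eq_one_iff _).mpr hστg, one_mul,
    (hsc.mk_commute hA hτg (hσ j g hg) (by omega)).eq]

end ActsInDegree

end JohnsonMorphism

theorem johnson_morphism_well_defined_general {G K : Type*} [Group G] [Group K]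
    (φ : K →* MulAut G) (A : ℕ → Subgroup G) (B : ℕ → Subgroup K)
    (hA0 : A 0 = ⊤)
    (hAdec : ∀ i, A (i + 1) ≤ A i)
    (hAsc : ∀ i j, ∀ g ∈ A i, ∀ g' ∈ A j, ⁅g, g'⁆ ∈ A (i + j + 1))
    (hact : ∀ i j, ∀ k ∈ B i, ∀ g ∈ A j, φ k g * g⁻¹ ∈ A (i + j + 1)) :
    -- well defined in `g`
    (∀ i j, ∀ k ∈ B i, ∀ g ∈ A j, ∀ g' ∈ A j, g⁻¹ * g' ∈ A (j + 1) →
        (φ k g * g⁻¹)⁻¹ * (φ k g' * g'⁻¹) ∈ A (i + j + 2)) ∧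
    -- additive in `g`
    (∀ i j, ∀ k ∈ B i, ∀ g ∈ A j, ∀ g' ∈ A j,
        (φ k (g * g') * (g * g')⁻¹)⁻¹ * ((φ k g * g⁻¹) * (φ k g' * g'⁻¹)) ∈
          A (i + j + 2)) ∧
    -- derivation property
    (∀ i j j', ∀ k ∈ B i, ∀ g ∈ A j, ∀ g' ∈ A j',
        (φ k ⁅g, g'⁆ * ⁅g, g'⁆⁻¹)⁻¹ *
            (⁅φ k g * g⁻¹, g'⁆ * ⁅g, φ k g' * g'⁻¹⁆) ∈ A (i + j + j' + 3)) ∧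
    -- well defined in `k` modulo `B_{i+1}`
    (∀ i j, ∀ k ∈ B i, ∀ k' ∈ B i, k⁻¹ * k' ∈ B (i + 1) → ∀ g ∈ A j,
        (φ k g * g⁻¹)⁻¹ * (φ k' g * g⁻¹) ∈ A (i + j + 2)) ∧
    -- multiplicative in `k`
    (∀ i j, ∀ k ∈ B i, ∀ k' ∈ B i, ∀ g ∈ A j,
        (φ (k * k') g * g⁻¹)⁻¹ * ((φ k g * g⁻¹) * (φ k' g * g⁻¹)) ∈ A (i + j + 2)) := by
  have hA : Antitone A := antitone_nat_of_succ_le hAdec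
  have : ∀ n, (A n).Normal := IsStronglyCentral.normal hA0 hA hAsc
  have hφ : ∀ i, ∀ k ∈ B i, ActsInDegree A i (φ k) := fun i k hk j g hg => hact i j k hk g hg
  refine ⟨?_, ?_, ?_, ?_, ?_⟩
  · intro i j k hk g _ g' _ hgg'
    exact QuotientGroup.eq.mp ((hφ i k hk).mk_autComm_eq_of_mk_eq (QuotientGroup.eq.mpr hgg'))
  · intro i j k hk g hg g' hg'
    exact QuotientGroup.eq.mp ((hφ i k hk).mk_autComm_mul hA hAsc hg hg')
  · intro i j j' k hk g hg g' hg'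
    exact QuotientGroup.eq.mp ((hφ i k hk).mk_autComm_commutatorElement hA hAsc hg hg')
  · intro i j k hk k' _ hkk' g hg
    have hk' : φ k' = φ k * φ (k⁻¹ * k') := by rw [← map_mul, mul_inv_cancel_left]
    rw [hk']
    exact QuotientGroup.eq.mp
      ((hφ i k hk).mk_autComm_mul_left_of_succ hA (hφ _ _ hkk') hg).symm
  · intro i j k hk k' hk' g hg
    rw [map_mul]
    exact QuotientGroup.eq.mp ((hφ i k hk).mk_autComm_mul_left hA hAsc (hφ i k' hk') hg)

/-- The Johnson morphism is well defined. Let `K` act on `G` via `φ`, with strongly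
central filtrations `A_*` on `G` and `B_*` on `K` (0-based: index `i` is the `(i+1)`-st
term) such that `[B_i, A_j] ⊆ A_{i+j}` (paper indexing). Then the map sending `k ∈ B_i`
to `g ↦ (k·g)g⁻¹` on graded pieces is: well defined in `g`, additive in `g`, a graded
derivation with respect to the Lie bracket, well defined in `k` modulo `B_{i+1}`, and
multiplicative in `k` — i.e. it induces a homomorphism `B_i/B_{i+1} →
Der_i(Lie(A_*))`. -/
theorem johnson_morphism_well_defined {G K : Type*} [Group G] [Group K]
    (φ : K →* MulAut G) (A : ℕ → Subgroup G) (B : ℕ → Subgroup K)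
    (hA0 : A 0 = ⊤) (hB0 : B 0 = ⊤)
    (hAdec : ∀ i, A (i + 1) ≤ A i) (hBdec : ∀ i, B (i + 1) ≤ B i)
    (hAsc : ∀ i j, ∀ g ∈ A i, ∀ g' ∈ A j, ⁅g, g'⁆ ∈ A (i + j + 1))
    (hBsc : ∀ i j, ∀ k ∈ B i, ∀ k' ∈ B j, ⁅k, k'⁆ ∈ B (i + j + 1))
    (hφ : ∀ (k : K) (j : ℕ), ∀ g ∈ A j, φ k g ∈ A j)
    (hact : ∀ i j, ∀ k ∈ B i, ∀ g ∈ A j, φ k g * g⁻¹ ∈ A (i + j + 1)) :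
    -- well defined in `g`
    (∀ i j, ∀ k ∈ B i, ∀ g ∈ A j, ∀ g' ∈ A j, g⁻¹ * g' ∈ A (j + 1) →
        (φ k g * g⁻¹)⁻¹ * (φ k g' * g'⁻¹) ∈ A (i + j + 2)) ∧
    -- additive in `g`
    (∀ i j, ∀ k ∈ B i, ∀ g ∈ A j, ∀ g' ∈ A j,
        (φ k (g * g') * (g * g')⁻¹)⁻¹ * ((φ k g * g⁻¹) * (φ k g' * g'⁻¹)) ∈
          A (i + j + 2)) ∧
    -- derivation property
    (∀ i j j', ∀ k ∈ B i, ∀ g ∈ A j, ∀ g' ∈ A j',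
        (φ k ⁅g, g'⁆ * ⁅g, g'⁆⁻¹)⁻¹ *
            (⁅φ k g * g⁻¹, g'⁆ * ⁅g, φ k g' * g'⁻¹⁆) ∈ A (i + j + j' + 3)) ∧
    -- well defined in `k` modulo `B_{i+1}`
    (∀ i j, ∀ k ∈ B i, ∀ k' ∈ B i, k⁻¹ * k' ∈ B (i + 1) → ∀ g ∈ A j,
        (φ k g * g⁻¹)⁻¹ * (φ k' g * g⁻¹) ∈ A (i + j + 2)) ∧
    -- multiplicative in `k`
    (∀ i j, ∀ k ∈ B i, ∀ k' ∈ B i, ∀ g ∈ A j,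
        (φ (k * k') g * g⁻¹)⁻¹ * ((φ k g * g⁻¹) * (φ k' g * g⁻¹)) ∈ A (i + j + 2)) :=
  johnson_morphism_well_defined_general φ A B hA0 hAdec hAsc hact
end
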